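/- Suppose R contains ℚ (R is a ℚ-algebra) and let c ∈ R. If p ∈ R[X_1,…,X_N] is such that M_{jk}(p) lies in the ideal generated by X·X − c for all pairs of distinct indices j, k ∈ {1,…,N}, then there exists a constant c' ∈ R such that p − c' lies in the ideal generated by X·X − c. -/

import Mathlib

open MvPolynomial

/-- The rotation generator `M_{jk} p = X_j ∂_k p − X_k ∂_j p`. -/
noncomputable def rot {R : Type*} [CommRing R] {N : ℕ} (j k : Fin N)
    (p : MvPolynomial (Fin N) R) : MvPolynomial (Fin N) R :=
  X j * pderiv k p - X k * pderiv j p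

/-- The Laplacian `Δ p = Σ_j ∂_j² p`. -/
noncomputable def lap {R : Type*} [CommRing R] {N : ℕ}
    (p : MvPolynomial (Fin N) R) : MvPolynomial (Fin N) R :=
  ∑ j, pderiv j (pderiv j p)

/-- The polynomial `X·X = X_1² + ⋯ + X_N²`. -/
noncomputable def XX (R : Type*) [CommRing R] (N : ℕ) : MvPolynomial (Fin N) R :=
  ∑ j, X j ^ 2

/-!
Induction on the total degree `m` of `p`. Since `X·X − c` is monic for the degree-lexicographic
order, multiplication by it raises the total degree by exactly two; hence the top homogeneous
component `f` of `p` satisfies `M_{jk} f ∈ (X·X)`. Euler's identity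
`∑_k X_k M_{jk} f = m X_j f − (X·X) ∂_j f` gives `X_j f = (X·X) v_j`, and then
`∑_j X_j v_j = f` because `X·X` is a nonzerodivisor. Taking the divergence,
`(N + m) f = ∑_j ∂_j (X_j f) = 2 f + (X·X) ∑_j ∂_j v_j`, so `f ∈ (X·X)` as `N + m − 2` is
invertible in `R`. Writing `f = (X·X) g`, the polynomial `p − (X·X − c) g` has smaller degree
and still satisfies the hypothesis.
-/

open MonomialOrder

section

variable {R : Type*} [CommRing R] {N : ℕ}

theorem Ideal.mem_of_natCast_mul_mem {A : Type*} [CommRing A] [Algebra ℚ A] (I : Ideal A)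
    {n : ℕ} (hn : n ≠ 0) {x : A} (h : (n : A) * x ∈ I) : x ∈ I := by
  have hu : IsUnit (n : A) := by
    simpa using (IsUnit.mk0 (n : ℚ) (Nat.cast_ne_zero.mpr hn)).map (algebraMap ℚ A)
  exact (I.unit_mul_mem_iff_mem hu).mp h

theorem MvPolynomial.IsHomogeneous.X_mul_pderiv {σ : Type*} {f : MvPolynomial σ R} {n : ℕ}
    (hf : f.IsHomogeneous n) (i j : σ) : (X i * pderiv j f).IsHomogeneous n := by
  rcases n with _ | n
  · rw [totalDegree_eq_zero_iff_eq_C.mp (Nat.le_zero.mp hf.totalDegree_le), pderiv_C, mul_zero]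
    exact isHomogeneous_zero _ _ _
  · simpa [add_comm] using (isHomogeneous_X R i).mul hf.pderiv

theorem MvPolynomial.totalDegree_sub_homogeneousComponent_lt {σ : Type*}
    {p : MvPolynomial σ R} (hp : 0 < p.totalDegree) :
    (p - homogeneousComponent p.totalDegree p).totalDegree < p.totalDegree := by
  have hs := p.sum_homogeneousComponent
  rw [Finset.sum_range_succ] at hs
  rw [← eq_sub_of_add_eq hs]
  refine (totalDegree_finsetSum_le fun i hi => ?_).trans_lt (Nat.pred_lt hp.ne')
  exact (homogeneousComponent_isHomogeneous i p).totalDegree_le.trans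
    (Nat.le_pred_of_lt (Finset.mem_range.mp hi))

theorem pderiv_XX (k : Fin N) : pderiv k (XX R N) = 2 * X k := by
  simp [XX, pderiv_X, Pi.single_apply, Finset.sum_ite_eq']

theorem XX_isHomogeneous : (XX R N).IsHomogeneous 2 :=
  IsHomogeneous.sum _ _ _ fun j _ => isHomogeneous_X_pow j 2

theorem degLex_degree_XX_sub_C_eq_and_monic [Nontrivial R] {n : ℕ} (c : R) :
    degLex.degree (XX R (n + 1) - C c) = Finsupp.single 0 2 ∧
      degLex.Monic (XX R (n + 1) - C c) := by
  have hX : degLex.degree (X 0 ^ 2 : MvPolynomial (Fin (n + 1)) R) = Finsupp.single 0 2 := by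
    classical
    rw [X_pow_eq_monomial, degree_monomial, if_neg one_ne_zero]
  have hlt : degLex.degree (∑ i : Fin n, X i.succ ^ 2 + C (-c) : MvPolynomial (Fin (n + 1)) R)
      ≺[degLex] Finsupp.single 0 2 := by
    have h0 : (0 : Fin (n + 1) →₀ ℕ) ≺[degLex] Finsupp.single 0 2 := by
      rw [degLex_lt_iff, Finsupp.DegLex.lt_iff]; simp
    refine lt_of_le_of_lt degLex.degree_add_le (max_lt ?_ ?_)
    · refine lt_of_le_of_lt degLex.degree_sum_le ((Finset.sup_lt_iff ?_).2 fun i _ => ?_)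
      · exact bot_le.trans_lt h0
      · rw [X_pow_eq_monomial]
        refine lt_of_le_of_lt (degLex.degree_monomial_le 1) ?_
        rw [degLex_lt_iff, Finsupp.DegLex.lt_iff]
        refine Or.inr ⟨by simp, Finsupp.Lex.lt_iff.2
          ⟨0, fun j hj => (Fin.not_lt_zero j hj).elim, ?_⟩⟩
        simp [Fin.succ_ne_zero]
    · rwa [degree_C]
  have hsplit : XX R (n + 1) - C c = X 0 ^ 2 + (∑ i : Fin n, X i.succ ^ 2 + C (-c)) := by
    rw [XX, Fin.sum_univ_succ, map_neg]; ring
  have hmonic : degLex.Monic (X 0 ^ 2 : MvPolynomial (Fin (n + 1)) R) := by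
    rw [X_pow_eq_monomial]; exact monic_monomial_one
  rw [← hX] at hlt
  rw [hsplit]
  exact ⟨(degree_add_of_lt hlt).trans hX, hmonic.add_of_lt hlt⟩

theorem totalDegree_XX_sub_C_mul (hN : 0 < N) (c : R) {f : MvPolynomial (Fin N) R}
    (hf : f ≠ 0) : ((XX R N - C c) * f).totalDegree = f.totalDegree + 2 := by
  obtain ⟨n, rfl⟩ : ∃ n, N = n + 1 := ⟨N - 1, by omega⟩
  rcases subsingleton_or_nontrivial R with _ | _
  · exact absurd (Subsingleton.elim f 0) hf
  obtain ⟨hdeg, hmonic⟩ := degLex_degree_XX_sub_C_eq_and_monic (R := R) (n := n) c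
  rw [← degree_degLexDegree, degree_mul_of_isRegular_left
    (by rw [hmonic.leadingCoeff_eq_one]; exact isRegular_one) hf, map_add, hdeg,
    degree_degLexDegree, Finsupp.degree_single, add_comm]

theorem XX_mul_eq_zero_iff (hN : 0 < N) {f : MvPolynomial (Fin N) R} :
    XX R N * f = 0 ↔ f = 0 := by
  obtain ⟨n, rfl⟩ : ∃ n, N = n + 1 := ⟨N - 1, by omega⟩
  nontriviality R
  have hmonic := (degLex_degree_XX_sub_C_eq_and_monic (R := R) (n := n) 0).2
  rw [map_zero, sub_zero] at hmonic
  rw [← leadingCoeff_eq_zero_iff (m := degLex),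
    leadingCoeff_mul_of_isRegular_left
      (by rw [hmonic.leadingCoeff_eq_one]; exact isRegular_one),
    hmonic.leadingCoeff_eq_one, one_mul, leadingCoeff_eq_zero_iff]

attribute [local instance] MvPolynomial.gradedAlgebra in
theorem homogeneousComponent_mem_span_XX (hN : 0 < N) (c : R) {q : MvPolynomial (Fin N) R}
    (hq : q ∈ Ideal.span {XX R N - C c}) {m : ℕ} (hqm : q.totalDegree ≤ m) :
    homogeneousComponent m q ∈ Ideal.span {XX R N} := by
  obtain ⟨f, rfl⟩ := Ideal.mem_span_singleton.mp hq
  rcases eq_or_ne f 0 with rfl | hf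
  · simp
  have hfm : f.totalDegree < m := by
    have := totalDegree_XX_sub_C_mul hN c hf
    omega
  rw [sub_mul, map_sub, homogeneousComponent_C_mul, homogeneousComponent_eq_zero _ _ hfm,
    mul_zero, sub_zero]
  have hhom : (Ideal.span {XX R N}).IsHomogeneous (homogeneousSubmodule (Fin N) R) :=
    Ideal.homogeneous_span _ _ fun x hx => ⟨2, Set.mem_singleton_iff.mp hx ▸ XX_isHomogeneous⟩
  exact homogeneousComponent_mem_of_mem hhom
    (Ideal.mul_mem_right _ _ (Ideal.mem_span_singleton_self _)) m

noncomputable def rotDerivation (j k : Fin N) :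
    Derivation R (MvPolynomial (Fin N) R) (MvPolynomial (Fin N) R) :=
  (X j : MvPolynomial (Fin N) R) • pderiv k - (X k : MvPolynomial (Fin N) R) • pderiv j

theorem rotDerivation_apply (j k : Fin N) (p : MvPolynomial (Fin N) R) :
    rotDerivation j k p = rot j k p := rfl

theorem rot_self (j : Fin N) (p : MvPolynomial (Fin N) R) : rot j j p = 0 :=
  sub_self _

theorem rot_XX_sub_C (j k : Fin N) (c : R) : rot j k (XX R N - C c) = 0 := by
  simp only [rot, map_sub, pderiv_XX, pderiv_C, sub_zero]
  ring

theorem rot_XX_sub_C_mul (j k : Fin N) (c : R) (g : MvPolynomial (Fin N) R) :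
    rot j k ((XX R N - C c) * g) = (XX R N - C c) * rot j k g := by
  rw [← rotDerivation_apply, Derivation.leibniz, rotDerivation_apply, rotDerivation_apply,
    rot_XX_sub_C, smul_zero, add_zero, smul_eq_mul]

theorem rot_sub_XX_sub_C_mul_mem {j k : Fin N} {c : R} {p : MvPolynomial (Fin N) R}
    (g : MvPolynomial (Fin N) R) (h : rot j k p ∈ Ideal.span {XX R N - C c}) :
    rot j k (p - (XX R N - C c) * g) ∈ Ideal.span {XX R N - C c} := by
  rw [← rotDerivation_apply, map_sub, rotDerivation_apply, rotDerivation_apply, rot_XX_sub_C_mul]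
  exact sub_mem h (Ideal.mul_mem_right _ _ (Ideal.mem_span_singleton_self _))

theorem MvPolynomial.IsHomogeneous.rot {f : MvPolynomial (Fin N) R} {n : ℕ}
    (hf : f.IsHomogeneous n) (j k : Fin N) : (rot j k f).IsHomogeneous n :=
  (hf.X_mul_pderiv j k).sub (hf.X_mul_pderiv k j)

theorem homogeneousComponent_rot (n : ℕ) (j k : Fin N) (p : MvPolynomial (Fin N) R) :
    homogeneousComponent n (rot j k p) = rot j k (homogeneousComponent n p) := by
  induction p using MvPolynomial.induction_on' with
  | monomial d a =>
    have hd : (monomial d a).IsHomogeneous d.degree := isHomogeneous_monomial a rfl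
    rw [homogeneousComponent_of_mem (hd.rot j k), homogeneousComponent_of_mem hd]
    split_ifs <;> simp [rot]
  | add p q hp hq =>
    simp only [← rotDerivation_apply, map_add] at hp hq ⊢
    rw [hp, hq]

theorem totalDegree_rot_le (j k : Fin N) (p : MvPolynomial (Fin N) R) :
    (rot j k p).totalDegree ≤ p.totalDegree := by
  conv_lhs => rw [← p.sum_homogeneousComponent, ← rotDerivation_apply, map_sum]
  refine totalDegree_finsetSum_le fun i hi => ?_
  rw [rotDerivation_apply]
  exact ((homogeneousComponent_isHomogeneous i p).rot j k).totalDegree_le.trans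
    (Nat.lt_succ_iff.mp (Finset.mem_range.mp hi))

theorem sum_X_mul_rot (j : Fin N) (f : MvPolynomial (Fin N) R) :
    ∑ k, X k * rot j k f = X j * ∑ k, X k * pderiv k f - XX R N * pderiv j f := by
  rw [XX, Finset.mul_sum, Finset.sum_mul, ← Finset.sum_sub_distrib]
  exact Finset.sum_congr rfl fun k _ => by rw [rot]; ring

theorem X_mul_mem_span_XX_of_rot_mem [Algebra ℚ R] {f : MvPolynomial (Fin N) R} {m : ℕ}
    (hm : 0 < m) (hf : f.IsHomogeneous m) (h : ∀ j k, rot j k f ∈ Ideal.span {XX R N})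
    (j : Fin N) : X j * f ∈ Ideal.span {XX R N} := by
  refine Ideal.mem_of_natCast_mul_mem _ hm.ne' ?_
  have key : (m : MvPolynomial (Fin N) R) * (X j * f)
      = ∑ k, X k * rot j k f + XX R N * pderiv j f := by
    rw [sum_X_mul_rot, hf.sum_X_mul_pderiv, nsmul_eq_mul]
    ring
  rw [key]
  exact add_mem (Ideal.sum_mem _ fun k _ => Ideal.mul_mem_left _ _ (h j k))
    (Ideal.mul_mem_right _ _ (Ideal.mem_span_singleton_self _))

theorem mem_span_XX_of_forall_X_mul_mem [Algebra ℚ R] (hN : 0 < N) {f : MvPolynomial (Fin N) R}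
    {m : ℕ} (hNm : 2 < N + m) (hf : f.IsHomogeneous m)
    (h : ∀ j, X j * f ∈ Ideal.span {XX R N}) : f ∈ Ideal.span {XX R N} := by
  choose v hv using fun j => Ideal.mem_span_singleton.mp (h j)
  have hsum : ∑ j, X j * v j = f := by
    rw [← sub_eq_zero, ← XX_mul_eq_zero_iff hN, mul_sub, Finset.mul_sum, sub_eq_zero]
    simp_rw [mul_left_comm (XX R N), ← hv]
    rw [XX, Finset.sum_mul]
    exact Finset.sum_congr rfl fun j _ => by ring
  have hdiv : ((N + m : ℕ) : MvPolynomial (Fin N) R) * f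
      = 2 * f + XX R N * ∑ j, pderiv j (v j) := by
    calc ((N + m : ℕ) : MvPolynomial (Fin N) R) * f = ∑ j, pderiv j (X j * f) := by
          simp [Finset.sum_add_distrib, hf.sum_X_mul_pderiv]
          ring
      _ = ∑ j, pderiv j (XX R N * v j) := by simp_rw [hv]
      _ = ∑ j, (2 * (X j * v j) + XX R N * pderiv j (v j)) :=
          Finset.sum_congr rfl fun j _ => by simp [pderiv_XX]; ring
      _ = 2 * ∑ j, X j * v j + XX R N * ∑ j, pderiv j (v j) := by
          rw [Finset.sum_add_distrib, Finset.mul_sum, Finset.mul_sum]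
      _ = 2 * f + XX R N * ∑ j, pderiv j (v j) := by rw [hsum]
  refine Ideal.mem_of_natCast_mul_mem _ (by omega : N + m - 2 ≠ 0) ?_
  have : ((N + m - 2 : ℕ) : MvPolynomial (Fin N) R) * f = XX R N * ∑ j, pderiv j (v j) := by
    push_cast [Nat.cast_sub hNm.le] at hdiv ⊢
    linear_combination hdiv
  rw [this]
  exact Ideal.mul_mem_right _ _ (Ideal.mem_span_singleton_self _)

theorem exists_totalDegree_sub_XX_sub_C_mul_lt [Algebra ℚ R] (hN : 2 ≤ N) (c : R)
    {p : MvPolynomial (Fin N) R} (hp : 0 < p.totalDegree)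
    (h : ∀ j k, j ≠ k → rot j k p ∈ Ideal.span {XX R N - C c}) :
    ∃ g, (p - (XX R N - C c) * g).totalDegree < p.totalDegree := by
  set m := p.totalDegree
  have htop_hom := homogeneousComponent_isHomogeneous m p
  have htop : homogeneousComponent m p ∈ Ideal.span {XX R N} := by
    refine mem_span_XX_of_forall_X_mul_mem (by omega) (by omega) htop_hom
      (X_mul_mem_span_XX_of_rot_mem hp htop_hom fun j k => ?_)
    rcases eq_or_ne j k with rfl | hjk
    · rw [rot_self]; exact zero_mem _
    · rw [← homogeneousComponent_rot]
      exact homogeneousComponent_mem_span_XX (by omega) c (h j k hjk) (totalDegree_rot_le j k p)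
  obtain ⟨g, hg⟩ := Ideal.mem_span_singleton.mp htop
  refine ⟨g, ?_⟩
  have hsplit : p - (XX R N - C c) * g = (p - homogeneousComponent m p) + C c * g := by
    rw [hg]; ring
  rw [hsplit]
  refine (totalDegree_add _ _).trans_lt (max_lt (totalDegree_sub_homogeneousComponent_lt hp) ?_)
  rcases eq_or_ne g 0 with rfl | hg0
  · simpa using hp
  have hdeg := totalDegree_XX_sub_C_mul (R := R) (by omega) 0 hg0
  rw [map_zero, sub_zero, ← hg] at hdeg
  have htop_deg := htop_hom.totalDegree_le
  exact (totalDegree_mul _ _).trans_lt (by rw [totalDegree_C]; omega)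

end

/-- over a ℚ-algebra, if all `M_{jk} p` lie in the ideal generated by
`X·X − c`, then `p` is congruent to a constant modulo that ideal. -/
theorem stmt10 {R : Type*} [CommRing R] [Algebra ℚ R] {N : ℕ} (hN : 2 ≤ N)
    (c : R) (p : MvPolynomial (Fin N) R)
    (h : ∀ j k : Fin N, j ≠ k → rot j k p ∈ Ideal.span {XX R N - C c}) :
    ∃ c' : R, p - C c' ∈ Ideal.span {XX R N - C c} := by
  induction hd : p.totalDegree using Nat.strong_induction_on generalizing p with
  | _ d ih =>
    rcases Nat.eq_zero_or_pos d with rfl | hpos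
    · refine ⟨coeff 0 p, ?_⟩
      rw [← totalDegree_eq_zero_iff_eq_C.mp hd, sub_self]
      exact zero_mem _
    obtain ⟨g, hg⟩ := exists_totalDegree_sub_XX_sub_C_mul_lt hN c (hd ▸ hpos) h
    obtain ⟨c', hc'⟩ := ih _ (hd ▸ hg) _
      (fun j k hjk => rot_sub_XX_sub_C_mul_mem g (h j k hjk)) rfl
    refine ⟨c', ?_⟩
    convert add_mem hc' (Ideal.mul_mem_right g _ (Ideal.mem_span_singleton_self _)) using 1
    ring
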